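/- arXiv:2103.03677 — 2 statements merged into one kernel-verified Lean document; each statement's English description precedes it below -/
import Mathlib

section
/- Let h : ℝ → ℝ be continuously differentiable on [0, T] with h(0) ≤ 0, and suppose h'' exists and satisfies h''(t) ≤ η almost everywhere on [0, T] for some η ≥ 0, where h' is absolutely continuous. If h'(0) ≤ −(γ/T)h(0) − (T/2)η for some γ ∈ (0, 1], then h(t) ≤ 0 for all t ∈ [0, T]. -/
theorem one_step_safety (h h' h'' : ℝ → ℝ) (T γ η : ℝ)
    (hT : 0 < T) (hγ : 0 < γ) (hγ1 : γ ≤ 1) (hη : 0 ≤ η)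
    (hderiv : ∀ t ∈ Set.Icc (0 : ℝ) T, HasDerivAt h (h' t) t)
    (hcont : ContinuousOn h' (Set.Icc 0 T))
    (hint : IntervalIntegrable h'' MeasureTheory.volume 0 T)
    (hAC : ∀ t ∈ Set.Icc (0 : ℝ) T, h' t = h' 0 + ∫ s in (0 : ℝ)..t, h'' s)
    (hbound : ∀ᵐ t ∂MeasureTheory.volume, t ∈ Set.Icc (0 : ℝ) T → h'' t ≤ η)
    (h0 : h 0 ≤ 0)
    (hinit : h' 0 ≤ -(γ / T) * h 0 - (T / 2) * η) :
    ∀ t ∈ Set.Icc (0 : ℝ) T, h t ≤ 0 := by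
  intro t ht
  obtain ⟨ht0, htT⟩ := ht
  -- Step 1: h' s ≤ h' 0 + η * s for s ∈ [0, T]
  have hderivbd : ∀ s ∈ Set.Icc (0 : ℝ) T, h' s ≤ h' 0 + η * s := by
    intro s hs
    obtain ⟨hs0, hsT⟩ := hs
    rw [hAC s ⟨hs0, hsT⟩]
    have hsub : Set.uIcc (0:ℝ) s ⊆ Set.Icc 0 T := by
      rw [Set.uIcc_of_le hs0]
      exact Set.Icc_subset_Icc le_rfl hsT
    have hintio : IntervalIntegrable h'' MeasureTheory.volume 0 s :=
      hint.mono_set (by rwa [Set.uIcc_of_le hT.le])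
    have : (∫ u in (0:ℝ)..s, h'' u) ≤ ∫ u in (0:ℝ)..s, η := by
      apply intervalIntegral.integral_mono_ae_restrict hs0 hintio
        intervalIntegrable_const
      have := MeasureTheory.ae_restrict_of_ae
        (μ := MeasureTheory.volume) (s := Set.Icc (0:ℝ) s) hbound
      filter_upwards [this, MeasureTheory.ae_restrict_mem measurableSet_Icc]
        with u hu hmem
      exact hu ⟨hmem.1, hmem.2.trans hsT⟩
    simpa [mul_comm] using add_le_add_left this (h' 0)
  -- Step 2: h t = h 0 + ∫ h'
  have hft : h t - h 0 = ∫ s in (0:ℝ)..t, h' s := by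
    symm
    apply intervalIntegral.integral_eq_sub_of_hasDerivAt
    · intro s hs
      rw [Set.uIcc_of_le ht0] at hs
      exact hderiv s ⟨hs.1, hs.2.trans htT⟩
    · apply (hcont.mono _).intervalIntegrable
      rw [Set.uIcc_of_le ht0]
      exact Set.Icc_subset_Icc le_rfl htT
  -- Step 3: integrate the bound
  have hintbd : (∫ s in (0:ℝ)..t, h' s) ≤ ∫ s in (0:ℝ)..t, (h' 0 + η * s) := by
    apply intervalIntegral.integral_mono_on ht0
    · apply (hcont.mono _).intervalIntegrable
      rw [Set.uIcc_of_le ht0]; exact Set.Icc_subset_Icc le_rfl htT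
    · exact (Continuous.continuousOn (by continuity)).intervalIntegrable
    · intro s hs
      exact hderivbd s ⟨hs.1, hs.2.trans htT⟩
  have hcalc : (∫ s in (0:ℝ)..t, (h' 0 + η * s)) = h' 0 * t + η * (t^2 / 2) := by
    rw [intervalIntegral.integral_add intervalIntegrable_const
      (by apply Continuous.intervalIntegrable; continuity),
      intervalIntegral.integral_const, intervalIntegral.integral_const_mul,
      integral_id]
    simp [smul_eq_mul]; ring
  have key : h t ≤ h 0 + h' 0 * t + η * (t^2 / 2) := by
    have := hintbd.trans_eq hcalc
    linarith [hft]
  -- Step 4: arithmetic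
  have hγt : γ * t ≤ T := by nlinarith
  have h1 : 0 ≤ 1 - γ * t / T := by
    rw [sub_nonneg, div_le_one hT]; exact hγt
  have hTne : T ≠ 0 := hT.ne'
  have : h 0 + h' 0 * t + η * (t^2 / 2) ≤
      (1 - γ * t / T) * h 0 + (t / 2) * η * (t - T) := by
    have : h' 0 * t ≤ (-(γ / T) * h 0 - (T / 2) * η) * t :=
      mul_le_mul_of_nonneg_right hinit ht0
    have hexp : (-(γ / T) * h 0 - (T / 2) * η) * t =
        (1 - γ * t / T) * h 0 + (t / 2) * η * (t - T) - h 0 - η * (t^2/2) := by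
      field_simp; ring
    linarith
  have hfin : (1 - γ * t / T) * h 0 + (t / 2) * η * (t - T) ≤ 0 := by
    have h2 : (1 - γ * t / T) * h 0 ≤ 0 := mul_nonpos_of_nonneg_of_nonpos h1 h0
    have h3 : (t / 2) * η * (t - T) ≤ 0 := by
      apply mul_nonpos_of_nonneg_of_nonpos
      · positivity
      · linarith
    linarith
  linarith
end

section
/- Let h : [0, ∞) → ℝ be continuously differentiable with h(0) ≤ 0, and let α : ℝ → ℝ be locally Lipschitz, strictly increasing, with α(0) = 0. If h'(t) ≤ α(−h(t)) for all t ≥ 0, then h(t) ≤ 0 for all t ≥ 0. -/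
theorem cbf_comparison_invariance (h h' α : ℝ → ℝ)
    (hderiv : ∀ t : ℝ, 0 ≤ t → HasDerivAt h (h' t) t)
    (hcont : ContinuousOn h' (Set.Ici 0))
    (hα : LocallyLipschitz α) (hmono : StrictMono α) (hα0 : α 0 = 0)
    (h0 : h 0 ≤ 0)
    (hineq : ∀ t : ℝ, 0 ≤ t → h' t ≤ α (-h t)) :
    ∀ t : ℝ, 0 ≤ t → h t ≤ 0 := by
  intro t ht
  by_contra hpos
  push_neg at hpos
  set S : Set ℝ := {u | u ∈ Set.Icc (0:ℝ) t ∧ h u ≤ 0} with hS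
  have h0S : (0:ℝ) ∈ S := ⟨⟨le_refl 0, ht⟩, h0⟩
  have hne : S.Nonempty := ⟨0, h0S⟩
  have hbdd : BddAbove S := ⟨t, fun u hu => hu.1.2⟩
  set s := sSup S with hsdef
  have hs0 : 0 ≤ s := le_csSup hbdd h0S
  have hst : s ≤ t := csSup_le hne fun u hu => hu.1.2
  have hcontAt : ∀ u : ℝ, 0 ≤ u → ContinuousAt h u := fun u hu =>
    (hderiv u hu).continuousAt
  have hhs : h s ≤ 0 := by
    by_contra hhs
    push_neg at hhs
    rcases Metric.continuousAt_iff.1 (hcontAt s hs0) (h s) hhs with ⟨δ, hδ, hδ'⟩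
    obtain ⟨u, huS, hu⟩ := exists_lt_of_lt_csSup hne (show s - δ < s by linarith)
    have hus : u ≤ s := le_csSup hbdd huS
    have hd : dist u s < δ := by rw [Real.dist_eq, abs_lt]; constructor <;> linarith
    have h2 := hδ' hd
    rw [Real.dist_eq, abs_lt] at h2
    have : h u > 0 := by linarith
    linarith [huS.2]
  have hslt : s < t := hst.lt_of_ne (fun he => absurd hpos (not_lt.2 (he ▸ hhs)))
  have hposafter : ∀ u, s < u → u ≤ t → 0 < h u := by
    intro u hsu hut
    by_contra hc
    push_neg at hc
    have : u ∈ S := ⟨⟨le_trans hs0 hsu.le, hut⟩, hc⟩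
    exact absurd (le_csSup hbdd this) (not_le.2 hsu)
  have hanti : StrictAntiOn h (Set.Icc s t) := by
    apply strictAntiOn_of_deriv_neg (convex_Icc s t)
    · intro u hu
      exact (hcontAt u (le_trans hs0 hu.1)).continuousWithinAt
    · intro u hu
      rw [interior_Icc] at hu
      have hu0 : 0 ≤ u := le_trans hs0 hu.1.le
      rw [(hderiv u hu0).deriv]
      have hpu : 0 < h u := hposafter u hu.1 hu.2.le
      have hlt : α (-h u) < α 0 := hmono (by linarith)
      have hle := hineq u hu0
      rw [hα0] at hlt
      linarith
  have := hanti ⟨le_refl s, hst⟩ ⟨hst, le_refl t⟩ hslt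
  linarith
end
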